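/- arXiv:1910.13765 — 4 statements merged into one kernel-verified Lean document; each statement's English description precedes it below -/
import Mathlib

section
/- In a parity game, for every node q, either q is in the winning region of Player 0 or q is in the winning region of Player 1 (positional determinacy: the winning regions partition the set of nodes). -/
/-- A parity game: disjoint node sets for Player 0 (`Q0`) and Player 1 (`Q1`)
covering `Q`, a left-total move relation `R`, and a priority function `p`. -/
structure ParityGame (Q : Type) where
  Q0 : Set Q
  Q1 : Set Q
  disj : Disjoint Q0 Q1
  covers : Q0 ∪ Q1 = Set.univ
  R : Q → Q → Prop
  total : ∀ q, ∃ q', R q q'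
  p : Q → ℕ

namespace ParityGame

variable {Q : Type} (G : ParityGame Q)

/-- The nodes of player `i` (`false` = Player 0, `true` = Player 1). -/
def nodes (i : Bool) : Set Q := if i then G.Q1 else G.Q0

/-- An (infinite) play: a sequence of nodes agreeing with the move relation. -/
def IsPlay (π : ℕ → Q) : Prop := ∀ n, G.R (π n) (π (n + 1))

/-- The set of priorities occurring infinitely often along `π`. -/
def InfPrio (π : ℕ → Q) : Set ℕ := {c | ∀ N, ∃ n, N ≤ n ∧ G.p (π n) = c}

/-- Player `i` wins play `π` iff the minimal priority occurring infinitely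
often has parity `i` (even for Player 0, odd for Player 1). -/
def WinsPlay (i : Bool) (π : ℕ → Q) : Prop :=
  if i then Odd (sInf (G.InfPrio π)) else Even (sInf (G.InfPrio π))

/-- A strategy for player `i` maps (strict past history, current node) to a
successor; it is legal if it always chooses an `R`-successor at `i`'s nodes. -/
def Legal (i : Bool) (σ : List Q → Q → Q) : Prop :=
  ∀ h q, q ∈ G.nodes i → G.R q (σ h q)

/-- A play is consistent with a strategy `σ` of player `i` if at every node of
player `i` the next node is the one chosen by `σ` on the history so far. -/
def Consistent (i : Bool) (σ : List Q → Q → Q) (π : ℕ → Q) : Prop :=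
  ∀ n, π n ∈ G.nodes i → π (n + 1) = σ (List.ofFn (fun k : Fin n => π k)) (π n)

/-- The winning region of player `i`: nodes from which `i` has a legal strategy
all of whose consistent plays are winning for `i`. -/
def WinRegion (i : Bool) : Set Q :=
  {q | ∃ σ, G.Legal i σ ∧
    ∀ π, G.IsPlay π → π 0 = q → G.Consistent i σ π → G.WinsPlay i π}

/-- `force i X`: the nodes from which player `i` can force the next node
to be in `X`. -/
def force (i : Bool) (X : Set Q) : Set Q :=
  {q | q ∈ G.nodes i ∧ ∃ q' ∈ X, G.R q q'} ∪
  {q | q ∈ G.nodes !i ∧ ∀ q', G.R q q' → q' ∈ X}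

/-- Extended-parity-game winning condition for player `i`, with visiting set
`V` and avoiding set `A`: player `i` wins `π` iff (after the first position)
`π` hits its target set before the opponent's one, or `π` forever avoids
`V ∪ A` and satisfies `i`'s parity condition. -/
def EWinsPlay (i : Bool) (V A : Set Q) (π : ℕ → Q) : Prop :=
  (∃ n, 1 ≤ n ∧ π n ∈ (if i then A else V) ∧
    ∀ m, 1 ≤ m → m < n → π m ∉ (if i then V else A)) ∨
  ((∀ n, 1 ≤ n → π n ∉ V ∪ A) ∧ G.WinsPlay i π)

/-- The winning region of player `i` in the extended parity game on `G` with
visiting set `V` and avoiding set `A`. -/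
def EWinRegion (i : Bool) (V A : Set Q) : Set Q :=
  {q | ∃ σ, G.Legal i σ ∧
    ∀ π, G.IsPlay π → π 0 = q → G.Consistent i σ π → G.EWinsPlay i V A π}

end ParityGame

open ParityGame

/-!
Zielonka's recursion on subgames, i.e. node sets `D` in which every node has a move into `D`.
Let `m` be the least priority in `D` and `k` the player of its parity. Remove the `k`-attractor
`A` of the nodes of priority `m` and split `D \ A` recursively. If the opponent wins nowhere
there, `k` wins all of `D`: a play either visits `A`, hence priority `m`, infinitely often, or it
stays in `D \ A` from some point on. Otherwise the opponent's attractor `B` to its region in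
`D \ A` is an opponent dominion of `D`, and the recursive split of `D \ B` extends to one of `D`.
All strategies obtained are positional.
-/

namespace ParityGame

open Set

variable {Q : Type} {G : ParityGame Q}

lemma mem_nodes_or_mem_nodes_not (k : Bool) (q : Q) : q ∈ G.nodes k ∨ q ∈ G.nodes (!k) := by
  have hq : q ∈ G.Q0 ∪ G.Q1 := G.covers ▸ mem_univ q
  cases k <;> simpa [nodes, or_comm] using hq

lemma notMem_nodes_not {k : Bool} {q : Q} (hq : q ∈ G.nodes k) : q ∉ G.nodes (!k) := by
  have := G.disj
  cases k <;> simp only [nodes, Bool.not_false, Bool.not_true] at hq ⊢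
  exacts [this.notMem_of_mem_left hq, this.notMem_of_mem_right hq]

lemma infPrio_shift (π : ℕ → Q) (N : ℕ) : G.InfPrio (fun n => π (N + n)) = G.InfPrio π := by
  ext c
  constructor
  · intro h M
    obtain ⟨n, hn, hc⟩ := h M
    exact ⟨N + n, by omega, hc⟩
  · intro h M
    obtain ⟨n, hn, hc⟩ := h (N + M)
    exact ⟨n - N, by omega, by simpa only [Nat.add_sub_cancel' (by omega : N ≤ n)]⟩

lemma winsPlay_shift (k : Bool) (π : ℕ → Q) (N : ℕ) :
    G.WinsPlay k (fun n => π (N + n)) ↔ G.WinsPlay k π := by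
  simp only [WinsPlay, infPrio_shift]

lemma winsPlay_of_frequently_min {D : Set Q} {m : ℕ} {π : ℕ → Q} (hπD : ∀ n, π n ∈ D)
    (hmin : ∀ q ∈ D, m ≤ G.p q) (hfreq : ∀ N, ∃ n, N ≤ n ∧ G.p (π n) = m) :
    G.WinsPlay (decide (Odd m)) π := by
  have hm : m ∈ G.InfPrio π := hfreq
  have hinf : sInf (G.InfPrio π) = m := by
    refine le_antisymm (Nat.sInf_le hm) (le_csInf ⟨m, hm⟩ ?_)
    rintro c hc
    obtain ⟨n, -, rfl⟩ := hc 0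
    exact hmin _ (hπD n)
  by_cases ho : Odd m
  · simp [WinsPlay, hinf, ho]
  · simpa [WinsPlay, hinf, ho] using Nat.not_odd_iff_even.mp ho

variable (G) in
/-- Controllable predecessor of `Y` for player `k` in the subgame on `D`. -/
def cpre (k : Bool) (D Y : Set Q) : Set Q :=
  {q | q ∈ D ∧ ((q ∈ G.nodes k ∧ ∃ q' ∈ D, G.R q q' ∧ q' ∈ Y) ∨
    (q ∈ G.nodes (!k) ∧ ∀ q' ∈ D, G.R q q' → q' ∈ Y))}

variable (G) in
def attrLevel (k : Bool) (D X : Set Q) : ℕ → Set Q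
  | 0 => X
  | n + 1 => attrLevel k D X n ∪ G.cpre k D (attrLevel k D X n)

variable (G) in
def attr (k : Bool) (D X : Set Q) : Set Q := ⋃ n, G.attrLevel k D X n

section Attractor

variable {k : Bool} {D X Y Y' : Set Q} {q : Q}

lemma cpre_mono (h : Y ⊆ Y') : G.cpre k D Y ⊆ G.cpre k D Y' := by
  rintro q ⟨hq, ⟨hk, q', hq', hR, hY⟩ | ⟨hk, hall⟩⟩
  · exact ⟨hq, .inl ⟨hk, q', hq', hR, h hY⟩⟩
  · exact ⟨hq, .inr ⟨hk, fun q' hq' hR => h (hall q' hq' hR)⟩⟩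

lemma exists_succ_of_mem_cpre (hq : q ∈ G.cpre k D Y) (hk : q ∈ G.nodes k) :
    ∃ q' ∈ D, G.R q q' ∧ q' ∈ Y := by
  rcases hq with ⟨-, ⟨-, h⟩ | ⟨hk', -⟩⟩
  exacts [h, absurd hk' (notMem_nodes_not hk)]

lemma succ_mem_of_mem_cpre (hq : q ∈ G.cpre k D Y) (hk : q ∈ G.nodes (!k)) :
    ∀ q' ∈ D, G.R q q' → q' ∈ Y := by
  rcases hq with ⟨-, ⟨hk', -⟩ | ⟨-, h⟩⟩
  exacts [absurd hk (notMem_nodes_not hk'), h]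

lemma attrLevel_mono : Monotone (G.attrLevel k D X) :=
  monotone_nat_of_le_succ fun _ _ => .inl

lemma attrLevel_subset (hX : X ⊆ D) : ∀ n, G.attrLevel k D X n ⊆ D
  | 0 => hX
  | _ + 1 => union_subset (attrLevel_subset hX _) fun _ hq => hq.1

lemma subset_attr : X ⊆ G.attr k D X := subset_iUnion (G.attrLevel k D X) 0

lemma attr_subset (hX : X ⊆ D) : G.attr k D X ⊆ D := iUnion_subset (attrLevel_subset hX)

lemma mem_cpre_of_mem_attrLevel_succ {n : ℕ} (hq : q ∈ G.attrLevel k D X (n + 1)) (hX : q ∉ X) :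
    q ∈ G.cpre k D (G.attrLevel k D X n) := by
  induction n with
  | zero => exact hq.resolve_left hX
  | succ n ih => exact hq.elim (fun h => cpre_mono (attrLevel_mono n.le_succ) (ih h)) id

lemma exists_mem_cpre_of_mem_attr (hq : q ∈ G.attr k D X) (hX : q ∉ X) :
    ∃ n, q ∈ G.cpre k D (G.attrLevel k D X n) := by
  obtain ⟨_ | n, hn⟩ := mem_iUnion.mp hq
  exacts [absurd hn hX, ⟨n, mem_cpre_of_mem_attrLevel_succ hn hX⟩]

lemma mem_attr_of_succ_mem (hq : q ∈ D) (hk : q ∈ G.nodes k) {q' : Q} (hq' : q' ∈ D)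
    (hR : G.R q q') (h : q' ∈ G.attr k D X) : q ∈ G.attr k D X := by
  obtain ⟨n, hn⟩ := mem_iUnion.mp h
  exact mem_iUnion.mpr ⟨n + 1, .inr ⟨hq, .inl ⟨hk, q', hq', hR, hn⟩⟩⟩

lemma cpre_attr_subset [Finite Q] : G.cpre k D (G.attr k D X) ⊆ G.attr k D X := by
  obtain ⟨N, hN⟩ := WellFoundedGT.monotone_chain_condition ⟨G.attrLevel k D X, attrLevel_mono⟩
  replace hN : ∀ n, N ≤ n → G.attrLevel k D X N = G.attrLevel k D X n := hN
  have hattr : G.attr k D X = G.attrLevel k D X N :=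
    subset_antisymm (iUnion_subset fun n => (le_total n N).elim (fun h => attrLevel_mono h)
      fun h => (hN n h).ge) (subset_iUnion _ N)
  rw [hattr]
  intro q hq
  rw [hN (N + 1) N.le_succ]
  exact .inr hq

variable (G) in
open Classical in
noncomputable def attrMove (k : Bool) (D X : Set Q) (q : Q) : Q :=
  if h : ∃ n, ∃ q' ∈ D, G.R q q' ∧ q' ∈ G.attrLevel k D X n then (Nat.find_spec h).choose else q

open Classical in
lemma attrMove_spec {n : ℕ} (hq : q ∈ G.cpre k D (G.attrLevel k D X n)) (hk : q ∈ G.nodes k) :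
    G.R q (G.attrMove k D X q) ∧ G.attrMove k D X q ∈ D ∧
      G.attrMove k D X q ∈ G.attrLevel k D X n := by
  have hsucc := exists_succ_of_mem_cpre hq hk
  have h : ∃ n, ∃ q' ∈ D, G.R q q' ∧ q' ∈ G.attrLevel k D X n := ⟨n, hsucc⟩
  obtain ⟨hD, hR, hlev⟩ := (Nat.find_spec h).choose_spec
  rw [attrMove, dif_pos h]
  exact ⟨hR, hD, attrLevel_mono (Nat.find_min' h hsucc) hlev⟩

lemma exists_mem_of_mem_attr {π : ℕ → Q} (hπ : G.IsPlay π) (hπD : ∀ n, π n ∈ D)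
    (hσ : ∀ n, π n ∈ G.attr k D X → π n ∉ X → π n ∈ G.nodes k →
      π (n + 1) = G.attrMove k D X (π n))
    {t : ℕ} (ht : π t ∈ G.attr k D X) : ∃ t' ≥ t, π t' ∈ X := by
  obtain ⟨n, hn⟩ := mem_iUnion.mp ht
  induction n generalizing t with
  | zero => exact ⟨t, le_rfl, hn⟩
  | succ n ih =>
    by_cases hX : π t ∈ X
    · exact ⟨t, le_rfl, hX⟩
    have hcpre := mem_cpre_of_mem_attrLevel_succ hn hX
    have hnext : π (t + 1) ∈ G.attrLevel k D X n := by
      rcases mem_nodes_or_mem_nodes_not k (π t) with hk | hk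
      · rw [hσ t ht hX hk]
        exact (attrMove_spec hcpre hk).2.2
      · exact succ_mem_of_mem_cpre hcpre hk _ (hπD _) (hπ t)
    obtain ⟨t', ht', hX'⟩ := ih (mem_iUnion.mpr ⟨n, hnext⟩) hnext
    exact ⟨t', by omega, hX'⟩

end Attractor

variable (G) in
def IsSubarena (D : Set Q) : Prop := ∀ q ∈ D, ∃ q' ∈ D, G.R q q'

lemma isSubarena_univ : G.IsSubarena univ := fun q _ => (G.total q).imp fun _ h => ⟨mem_univ _, h⟩

lemma IsSubarena.diff_attr [Finite Q] {D : Set Q} (hD : G.IsSubarena D) (k : Bool) (X : Set Q) :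
    G.IsSubarena (D \ G.attr k D X) := by
  rintro q ⟨hqD, hqA⟩
  rcases mem_nodes_or_mem_nodes_not k q with hk | hk
  · obtain ⟨q', hq'D, hR⟩ := hD q hqD
    exact ⟨q', ⟨hq'D, fun h => hqA (mem_attr_of_succ_mem hqD hk hq'D hR h)⟩, hR⟩
  · by_contra! hall
    refine hqA (cpre_attr_subset ⟨hqD, .inr ⟨hk, fun q' hq' hR => ?_⟩⟩)
    exact by_contra fun h => hall q' ⟨hq', h⟩ hR

variable (G) in
/-- `W` is a `k`-dominion of the subgame on `D`, won by the positional strategy `σ`. -/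
structure IsDominion (D : Set Q) (k : Bool) (W : Set Q) (σ : Q → Q) : Prop where
  subset : W ⊆ D
  move : ∀ q ∈ W, q ∈ G.nodes k → G.R q (σ q) ∧ σ q ∈ W
  trap : ∀ q ∈ W, q ∈ G.nodes (!k) → ∀ q' ∈ D, G.R q q' → q' ∈ W
  wins : ∀ π, G.IsPlay π → (∀ n, π n ∈ W) → (∀ n, π n ∈ G.nodes k → π (n + 1) = σ (π n)) →
    G.WinsPlay k π

namespace IsDominion

variable {D W B : Set Q} {k : Bool} {σ τ : Q → Q}

lemma empty (D : Set Q) (k : Bool) (σ : Q → Q) : G.IsDominion D k ∅ σ :=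
  ⟨empty_subset D, fun _ h => h.elim, fun _ h => h.elim, fun _ _ h => (h 0).elim⟩

lemma mem_of_le (h : G.IsDominion D k W σ) {π : ℕ → Q} (hπ : G.IsPlay π) {t : ℕ}
    (hπD : ∀ n, t ≤ n → π n ∈ D) (hσ : ∀ n, π n ∈ W → π n ∈ G.nodes k → π (n + 1) = σ (π n))
    (ht : π t ∈ W) : ∀ n, t ≤ n → π n ∈ W := by
  refine Nat.le_induction ht fun n hn hW => ?_
  rcases mem_nodes_or_mem_nodes_not k (π n) with hk | hk
  · rw [hσ n hW hk]
    exact (h.move _ hW hk).2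
  · exact h.trap _ hW hk _ (hπD _ (by omega)) (hπ n)

lemma winsPlay (h : G.IsDominion D k W σ) {π : ℕ → Q} (hπ : G.IsPlay π) {t : ℕ}
    (hπD : ∀ n, t ≤ n → π n ∈ D) (hσ : ∀ n, π n ∈ W → π n ∈ G.nodes k → π (n + 1) = σ (π n))
    (ht : π t ∈ W) : G.WinsPlay k π := by
  have hW := h.mem_of_le hπ hπD hσ ht
  rw [← winsPlay_shift k π t]
  exact h.wins _ (fun n => hπ (t + n)) (fun n => hW (t + n) (Nat.le_add_right t n))
    fun n hk => hσ (t + n) (hW (t + n) (Nat.le_add_right t n)) hk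

lemma of_diff_attr {X : Set Q} (h : G.IsDominion (D \ G.attr (!k) D X) k W σ) :
    G.IsDominion D k W σ where
  subset := h.subset.trans sdiff_subset
  move := h.move
  trap q hq hk q' hq' hR := by
    refine h.trap q hq hk q' ⟨hq', fun hA => ?_⟩ hR
    exact (h.subset hq).2 (mem_attr_of_succ_mem (h.subset hq).1 hk hq' hR hA)
  wins := h.wins

open Classical in
lemma attr [Finite Q] (h : G.IsDominion D k W σ) :
    G.IsDominion D k (G.attr k D W) (W.piecewise σ (G.attrMove k D W)) where
  subset := attr_subset h.subset
  move q hq hk := by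
    by_cases hW : q ∈ W
    · rw [piecewise_eq_of_mem _ _ _ hW]
      exact (h.move q hW hk).imp_right fun h' => subset_attr h'
    · obtain ⟨n, hn⟩ := exists_mem_cpre_of_mem_attr hq hW
      obtain ⟨hR, -, hlev⟩ := attrMove_spec hn hk
      rw [piecewise_eq_of_notMem _ _ _ hW]
      exact ⟨hR, mem_iUnion.mpr ⟨n, hlev⟩⟩
  trap q hq hk q' hq' hR := by
    by_cases hW : q ∈ W
    · exact subset_attr (h.trap q hW hk q' hq' hR)
    · obtain ⟨n, hn⟩ := exists_mem_cpre_of_mem_attr hq hW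
      exact mem_iUnion.mpr ⟨n, succ_mem_of_mem_cpre hn hk q' hq' hR⟩
  wins π hπ hA hσ := by
    have hAD : ∀ n, π n ∈ D := fun n => attr_subset h.subset (hA n)
    obtain ⟨t, -, ht⟩ := exists_mem_of_mem_attr hπ hAD
      (fun n _ hW hk => (hσ n hk).trans (piecewise_eq_of_notMem _ _ _ hW)) (hA 0)
    exact h.winsPlay hπ (fun n _ => hAD n)
      (fun n hW hk => (hσ n hk).trans (piecewise_eq_of_mem _ _ _ hW)) ht

open Classical in
lemma union (hB : G.IsDominion D k B σ) (hW : G.IsDominion (D \ B) k W τ) :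
    G.IsDominion D k (B ∪ W) (B.piecewise σ τ) where
  subset := union_subset hB.subset (hW.subset.trans sdiff_subset)
  move q hq hk := by
    by_cases hqB : q ∈ B
    · rw [piecewise_eq_of_mem _ _ _ hqB]
      exact (hB.move q hqB hk).imp_right Or.inl
    · rw [piecewise_eq_of_notMem _ _ _ hqB]
      exact (hW.move q (hq.resolve_left hqB) hk).imp_right Or.inr
  trap q hq hk q' hq' hR := by
    by_cases hqB : q ∈ B
    · exact .inl (hB.trap q hqB hk q' hq' hR)
    by_cases hq'B : q' ∈ B
    · exact .inl hq'B
    · exact .inr (hW.trap q (hq.resolve_left hqB) hk q' ⟨hq', hq'B⟩ hR)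
  wins π hπ hBW hσ := by
    have hπD : ∀ n, π n ∈ D := fun n =>
      (hBW n).elim (fun h => hB.subset h) fun h => (hW.subset h).1
    by_cases hvisit : ∃ t, π t ∈ B
    · obtain ⟨t, ht⟩ := hvisit
      exact hB.winsPlay hπ (fun n _ => hπD n)
        (fun n hn hk => (hσ n hk).trans (piecewise_eq_of_mem _ _ _ hn)) ht
    · rw [not_exists] at hvisit
      exact hW.wins π hπ (fun n => (hBW n).resolve_left (hvisit n))
        fun n hk => (hσ n hk).trans (piecewise_eq_of_notMem _ _ _ (hvisit n))

lemma self_of_min {X : Set Q} {m : ℕ} (hD : G.IsSubarena D)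
    (hXm : ∀ q ∈ X, G.p q = m) (hmin : ∀ q ∈ D, m ≤ G.p q)
    (h : G.IsDominion (D \ G.attr (decide (Odd m)) D X) (decide (Odd m))
      (D \ G.attr (decide (Odd m)) D X) σ) :
    ∃ τ, G.IsDominion D (decide (Odd m)) D τ := by
  classical
  set k := decide (Odd m)
  set A := G.attr k D X
  choose! f hf using hD
  refine ⟨A.piecewise (X.piecewise f (G.attrMove k D X)) σ, subset_rfl, ?_,
    fun _ _ _ _ hq' _ => hq', ?_⟩
  · intro q hq hk
    by_cases hA : q ∈ A
    · rw [piecewise_eq_of_mem _ _ _ hA]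
      by_cases hX : q ∈ X
      · rw [piecewise_eq_of_mem _ _ _ hX]
        exact (hf q hq).symm
      · obtain ⟨n, hn⟩ := exists_mem_cpre_of_mem_attr hA hX
        rw [piecewise_eq_of_notMem _ _ _ hX]
        exact (attrMove_spec hn hk).imp_right And.left
    · rw [piecewise_eq_of_notMem _ _ _ hA]
      exact (h.move q ⟨hq, hA⟩ hk).imp_right And.left
  · intro π hπ hπD hσ
    by_cases hfreq : ∀ N, ∃ n, N ≤ n ∧ π n ∈ A
    · refine winsPlay_of_frequently_min hπD hmin fun N => ?_
      obtain ⟨n, hNn, hn⟩ := hfreq N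
      obtain ⟨t, htn, ht⟩ := exists_mem_of_mem_attr hπ hπD (fun n hA hX hk => by
        rw [hσ n hk, piecewise_eq_of_mem _ _ _ hA, piecewise_eq_of_notMem _ _ _ hX]) hn
      exact ⟨t, hNn.trans htn, hXm _ ht⟩
    · push Not at hfreq
      obtain ⟨N, hN⟩ := hfreq
      exact h.winsPlay hπ (fun n hn => ⟨hπD n, hN n hn⟩)
        (fun n hn hk => (hσ n hk).trans (piecewise_eq_of_notMem _ _ _ hn.2)) ⟨hπD N, hN N le_rfl⟩

open Classical in
lemma subset_winRegion (h : G.IsDominion univ k W σ) : W ⊆ G.WinRegion k := by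
  intro q hq
  refine ⟨fun _ q => if G.R q (σ q) then σ q else (G.total q).choose,
    fun _ q _ => ?_, fun π hπ hπ0 hcons => ?_⟩
  · dsimp only
    split_ifs with hR
    exacts [hR, (G.total q).choose_spec]
  · refine h.winsPlay hπ (fun n _ => mem_univ _) (fun n hn hk => ?_) (hπ0 ▸ hq : π 0 ∈ W)
    rw [hcons n hk]
    exact if_pos (h.move _ hn hk).1

end IsDominion

variable (G) in
def IsDetermined (D : Set Q) : Prop :=
  ∀ k, ∃ W W' σ σ', W ∪ W' = D ∧ G.IsDominion D k W σ ∧ G.IsDominion D (!k) W' σ'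

lemma IsDetermined.of_player {D : Set Q} (k : Bool)
    (h : ∃ W W' σ σ', W ∪ W' = D ∧ G.IsDominion D k W σ ∧ G.IsDominion D (!k) W' σ') :
    G.IsDetermined D := by
  intro j
  rcases Bool.eq_or_eq_not j k with rfl | rfl
  · exact h
  · obtain ⟨W, W', σ, σ', hcover, hW, hW'⟩ := h
    exact ⟨W', W, σ', σ, (union_comm _ _).trans hcover, hW', by rwa [Bool.not_not]⟩

lemma isDetermined_empty : G.IsDetermined ∅ := fun k =>
  ⟨∅, ∅, id, id, union_empty ∅, .empty ∅ k id, .empty ∅ (!k) id⟩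

theorem IsSubarena.isDetermined [Finite Q] {D : Set Q} (hD : G.IsSubarena D) :
    G.IsDetermined D := by
  induction D using WellFoundedLT.induction with | _ D ih => ?_
  rcases D.eq_empty_or_nonempty with rfl | hne
  · exact isDetermined_empty
  obtain ⟨q₀, hq₀D, hq₀⟩ := D.exists_min_image G.p D.toFinite hne
  set k := decide (Odd (G.p q₀))
  set X := {q ∈ D | G.p q = G.p q₀}
  set A := G.attr k D X
  have hA : D \ A ⊂ D := sdiff_ssubset_left_iff.mpr ⟨q₀, hq₀D, subset_attr ⟨hq₀D, rfl⟩⟩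
  obtain ⟨W, W', σ, σ', hcover, hW, hW'⟩ := ih _ hA (hD.diff_attr k X) k
  rcases W'.eq_empty_or_nonempty with rfl | hW'ne
  · rw [union_empty] at hcover
    subst hcover
    obtain ⟨τ, hτ⟩ := IsDominion.self_of_min hD (fun q hq => hq.2) hq₀ hW
    exact .of_player k ⟨D, ∅, τ, id, union_empty D, hτ, .empty D (!k) id⟩
  set B := G.attr (!k) D W'
  have hB : G.IsDominion D (!k) B _ :=
    IsDominion.attr (IsDominion.of_diff_attr (by rwa [Bool.not_not]))
  have hBD : D \ B ⊂ D := sdiff_ssubset_left_iff.mpr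
    (hW'ne.mono fun q hq => ⟨(hW'.subset hq).1, subset_attr hq⟩)
  obtain ⟨U, U', τ, τ', hcover', hU, hU'⟩ := ih _ hBD (hD.diff_attr (!k) W') k
  refine .of_player k ⟨U, B ∪ U', τ, _, ?_, hU.of_diff_attr, hB.union hU'⟩
  rw [union_left_comm, hcover', union_sdiff_cancel hB.subset]

end ParityGame

/-- Positional determinacy: in a parity game on a finite node set, every node
belongs to the winning region of Player 0 or to the winning region of
Player 1. -/
theorem parity_determinacy {Q : Type} [Fintype Q] (G : ParityGame Q) :
    ∀ q : Q, q ∈ G.WinRegion false ∨ q ∈ G.WinRegion true := by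
  intro q
  obtain ⟨W₀, W₁, σ₀, σ₁, hcover, h₀, h₁⟩ := isSubarena_univ.isDetermined (G := G) false
  have hq : q ∈ W₀ ∪ W₁ := hcover ▸ Set.mem_univ q
  exact hq.imp (h₀.subset_winRegion ·) (h₁.subset_winRegion ·)
end

section
/- If Player i has a winning strategy from node q in a parity game, then Player i has a memoryless (positional) winning strategy from q. -/
open ParityGame
namespace ParityGame

variable {Q : Type} (G : ParityGame Q)

lemma mem_nodes_or (j : Bool) (q : Q) : q ∈ G.nodes j ∨ q ∈ G.nodes (!j) := by
  have h := G.covers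
  have : q ∈ G.Q0 ∪ G.Q1 := h ▸ Set.mem_univ q
  cases j <;> simp only [nodes, Bool.not_true, Bool.not_false, if_true, if_false] <;>
    rcases this with h0 | h1 <;> tauto

lemma nodes_disj {j : Bool} {q : Q} (h1 : q ∈ G.nodes j) (h2 : q ∈ G.nodes (!j)) : False := by
  have h := G.disj
  rw [Set.disjoint_left] at h
  cases j <;> simp [nodes] at h1 h2 <;> exact h ‹_› ‹_›

lemma infPrio_nonempty [Fintype Q] (π : ℕ → Q) : (G.InfPrio π).Nonempty := by
  have : ∃ q : Q, (π ⁻¹' {q}).Infinite := by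
    by_contra h
    push_neg at h
    have : (Set.univ : Set ℕ).Finite := by
      have : (Set.univ : Set ℕ) = ⋃ q : Q, π ⁻¹' {q} := by
        ext n; simp
      rw [this]
      exact Set.finite_iUnion h
    exact Set.infinite_univ this
  obtain ⟨q, hq⟩ := this
  refine ⟨G.p q, fun N => ?_⟩
  obtain ⟨n, hn1, hn2⟩ := hq.exists_gt N
  exact ⟨n, le_of_lt hn2, by simp only [Set.mem_preimage, Set.mem_singleton_iff] at hn1; rw [hn1]⟩

lemma infPrio_tail (π : ℕ → Q) (N : ℕ) : G.InfPrio (fun k => π (k + N)) = G.InfPrio π := by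
  ext c
  constructor
  · intro h M
    obtain ⟨n, hn, hp⟩ := h M
    exact ⟨n + N, by omega, hp⟩
  · intro h M
    obtain ⟨n, hn, hp⟩ := h (M + N)
    refine ⟨n - N, by omega, ?_⟩
    simp only []
    have : n - N + N = n := by omega
    rw [this]; exact hp

lemma winsPlay_tail {j : Bool} {π : ℕ → Q} {N : ℕ}
    (h : G.WinsPlay j (fun k => π (k + N))) : G.WinsPlay j π := by
  unfold WinsPlay at h ⊢
  rwa [infPrio_tail] at h

lemma winsPlay_not_both {j : Bool} {π : ℕ → Q}
    (h1 : G.WinsPlay j π) (h2 : G.WinsPlay (!j) π) : False := by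
  cases j <;> simp [WinsPlay] at h1 h2 <;>
    exact (Nat.not_even_iff_odd.mpr ‹Odd _›) ‹Even _›

end ParityGame
namespace ParityGame

variable {Q : Type} (G : ParityGame Q)

/-- Totality of the move relation restricted to `S`. -/
def TotalOn (S : Set Q) : Prop := ∀ q ∈ S, ∃ q', q' ∈ S ∧ G.R q q'

/-- Iterated attractor for player `j` towards `T` inside `S`. -/
def attrN (j : Bool) (S T : Set Q) : ℕ → Set Q
  | 0 => T
  | n+1 => attrN j S T n ∪
      {q | q ∈ S ∧ q ∈ G.nodes j ∧ ∃ q', q' ∈ attrN j S T n ∧ G.R q q'} ∪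
      {q | q ∈ S ∧ q ∈ G.nodes (!j) ∧ ∀ q', q' ∈ S → G.R q q' → q' ∈ attrN j S T n}

lemma attrN_mono {j : Bool} {S T : Set Q} : ∀ {m n : ℕ}, m ≤ n →
    G.attrN j S T m ⊆ G.attrN j S T n := by
  intro m n h
  induction n with
  | zero => have : m = 0 := by omega
            subst this; exact subset_rfl
  | succ n ih =>
    rcases Nat.lt_or_ge m (n+1) with h' | h'
    · exact (ih (by omega)).trans (by intro x hx; exact Or.inl (Or.inl hx))
    · have : m = n + 1 := by omega
      subst this; exact subset_rfl

lemma attrN_subset {j : Bool} {S T : Set Q} (hT : T ⊆ S) :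
    ∀ n, G.attrN j S T n ⊆ S := by
  intro n
  induction n with
  | zero => exact hT
  | succ n ih =>
    rintro x ((hx | hx) | hx)
    · exact ih hx
    · exact hx.1
    · exact hx.1

/-- The attractor specification, bundled. -/
lemma attr_spec [Fintype Q] (j : Bool) (S T : Set Q) (hT : T ⊆ S) :
    ∃ (A : Set Q) (b : Q → Q) (rk : Q → ℕ),
      T ⊆ A ∧ A ⊆ S ∧
      (∀ q ∈ A, q ∉ T → q ∈ G.nodes j → G.R q (b q) ∧ b q ∈ A ∧ rk (b q) < rk q) ∧
      (∀ q ∈ A, q ∉ T → q ∈ G.nodes (!j) → ∀ q', q' ∈ S → G.R q q' → q' ∈ A ∧ rk q' < rk q) ∧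
      (∀ q ∈ S, q ∉ A → q ∈ G.nodes j → ∀ q', G.R q q' → q' ∉ A) ∧
      (∀ q ∈ S, q ∉ A → q ∈ G.nodes (!j) → ∃ q', q' ∈ S ∧ q' ∉ A ∧ G.R q q') := by
  classical
  set A : Set Q := ⋃ n, G.attrN j S T n with hA
  have hmemA : ∀ q, q ∈ A ↔ ∃ n, q ∈ G.attrN j S T n := by
    intro q; simp [hA]
  set rk : Q → ℕ := fun q => if h : ∃ n, q ∈ G.attrN j S T n then Nat.find h else 0 with hrk
  have hrk_mem : ∀ q ∈ A, q ∈ G.attrN j S T (rk q) := by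
    intro q hq
    obtain h := (hmemA q).mp hq
    simp only [hrk, dif_pos h]
    exact Nat.find_spec h
  have hrk_le : ∀ q n, q ∈ G.attrN j S T n → rk q ≤ n := by
    intro q n hn
    have h : ∃ n, q ∈ G.attrN j S T n := ⟨n, hn⟩
    simp only [hrk, dif_pos h]
    exact Nat.find_le hn
  have hTA : T ⊆ A := fun q hq => (hmemA q).mpr ⟨0, hq⟩
  have hAS : A ⊆ S := by
    intro q hq
    obtain ⟨n, hn⟩ := (hmemA q).mp hq
    exact attrN_subset G hT n hn
  have hrk_pos : ∀ q ∈ A, q ∉ T → ∃ m, rk q = m + 1 ∧ q ∈ G.attrN j S T (m+1) ∧ q ∉ G.attrN j S T m := by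
    intro q hq hqT
    have h1 := hrk_mem q hq
    have h2 : rk q ≠ 0 := by
      intro h0
      rw [h0] at h1
      exact hqT h1
    obtain ⟨m, hm⟩ := Nat.exists_eq_succ_of_ne_zero h2
    rw [hm] at h1
    refine ⟨m, hm, h1, fun hc => ?_⟩
    have := hrk_le q m hc
    omega
  -- stabilization
  have hstab : ∃ N, ∀ q ∈ A, q ∈ G.attrN j S T N := by
    refine ⟨Finset.univ.sup rk, fun q hq => ?_⟩
    exact attrN_mono G (Finset.le_sup (Finset.mem_univ q)) (hrk_mem q hq)
  obtain ⟨N, hN⟩ := hstab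
  -- the attractor strategy
  set b : Q → Q := fun q =>
    if h : ∃ q', q' ∈ A ∧ rk q' < rk q ∧ G.R q q' then h.choose else q with hb
  refine ⟨A, b, rk, hTA, hAS, ?_, ?_, ?_, ?_⟩
  · intro q hq hqT hqj
    obtain ⟨m, hm, hmem, hnot⟩ := hrk_pos q hq hqT
    have : ∃ q', q' ∈ A ∧ rk q' < rk q ∧ G.R q q' := by
      rcases hmem with (hc | hc) | hc
      · exact absurd hc hnot
      · obtain ⟨_, _, q', hq'm, hq'R⟩ := hc
        exact ⟨q', (hmemA q').mpr ⟨m, hq'm⟩, by have := hrk_le q' m hq'm; omega, hq'R⟩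
      · exact absurd hqj (fun h => G.nodes_disj h hc.2.1)
    simp only [hb, dif_pos this]
    obtain ⟨h1, h2, h3⟩ := this.choose_spec
    exact ⟨h3, h1, h2⟩
  · intro q hq hqT hqj q' hq'S hR
    obtain ⟨m, hm, hmem, hnot⟩ := hrk_pos q hq hqT
    rcases hmem with (hc | hc) | hc
    · exact absurd hc hnot
    · exact absurd hc.2.1 (fun h => G.nodes_disj h hqj)
    · have hq'm := hc.2.2 q' hq'S hR
      exact ⟨(hmemA q').mpr ⟨m, hq'm⟩, by have := hrk_le q' m hq'm; omega⟩
  · intro q hqS hqA hqj q' hR hq'A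
    obtain ⟨n, hn⟩ := (hmemA q').mp hq'A
    exact hqA ((hmemA q).mpr ⟨n+1, Or.inl (Or.inr ⟨hqS, hqj, q', hn, hR⟩)⟩)
  · intro q hqS hqA hqj
    by_contra h
    push_neg at h
    refine hqA ((hmemA q).mpr ⟨N+1, Or.inr ⟨hqS, hqj, fun q' hq'S hR => ?_⟩⟩)
    have hq'A : q' ∈ A := by
      by_contra hc
      exact h q' hq'S hc hR
    exact hN q' hq'A

set_option maxHeartbeats 1000000 in
/-- Reaching the target along a rank-decreasing sequence. -/
lemma seq_reach {A T : Set Q} {rk : Q → ℕ} {π : ℕ → Q}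
    (h : ∀ n, π n ∈ A → π n ∉ T → π (n+1) ∈ A ∧ rk (π (n+1)) < rk (π n)) :
    ∀ n, π n ∈ A → ∃ m, n ≤ m ∧ π m ∈ T := by
  have key : ∀ k n, rk (π n) ≤ k → π n ∈ A → ∃ m, n ≤ m ∧ π m ∈ T := by
    intro k
    induction k with
    | zero =>
      intro n hle hA
      by_cases hT : π n ∈ T
      · exact ⟨n, le_rfl, hT⟩
      · have := (h n hA hT).2; omega
    | succ k ih =>
      intro n hle hA
      by_cases hT : π n ∈ T
      · exact ⟨n, le_rfl, hT⟩
      · obtain ⟨hA', hlt⟩ := h n hA hT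
        obtain ⟨m, hm, hmT⟩ := ih (n+1) (by omega) hA'
        exact ⟨m, by omega, hmT⟩
  exact fun n hA => key (rk (π n)) n le_rfl hA

end ParityGame
namespace ParityGame

variable {Q : Type} (G : ParityGame Q)

lemma isPlay_tail {π : ℕ → Q} (hplay : G.IsPlay π) (N : ℕ) :
    G.IsPlay (fun k => π (k + N)) := by
  intro k
  show G.R (π (k + N)) (π (k + 1 + N))
  have e : k + 1 + N = (k + N) + 1 := by omega
  rw [e]
  exact hplay (k + N)

/-- Once in a region with a trapping strategy, the play stays there. -/
lemma stay_from {S W : Set Q} {j : Bool} {s : Q → Q} {π : ℕ → Q}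
    (hplay : G.IsPlay π) (hin : ∀ n, π n ∈ S)
    (hstrat : ∀ q ∈ W, q ∈ G.nodes j → s q ∈ W)
    (htrap : ∀ q ∈ W, q ∈ G.nodes (!j) → ∀ q', q' ∈ S → G.R q q' → q' ∈ W)
    (hcons : ∀ n, π n ∈ G.nodes j → π (n+1) = s (π n))
    {m : ℕ} (h0 : π m ∈ W) : ∀ n, m ≤ n → π n ∈ W := by
  have key : ∀ d, π (m + d) ∈ W := by
    intro d
    induction d with
    | zero => exact h0
    | succ d ih =>
      have e : m + (d+1) = (m+d) + 1 := by omega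
      rw [e]
      rcases G.mem_nodes_or j (π (m+d)) with hj | hj
      · rw [hcons _ hj]
        exact hstrat _ ih hj
      · exact htrap _ ih hj _ (hin _) (hplay _)
  intro n hn
  have := key (n - m)
  rwa [show m + (n - m) = n by omega] at this

/-- A "good pair" for player `j` in the subgame on `S`: a region `W` and a
positional strategy `s` such that `s` stays in `W`, the opponent cannot leave
`W` within `S`, and every consistent play in `S` starting in `W` is won. -/
def GoodPair (S : Set Q) (j : Bool) (W : Set Q) (s : Q → Q) : Prop :=
  W ⊆ S ∧
  (∀ q ∈ W, q ∈ G.nodes j → G.R q (s q) ∧ s q ∈ W) ∧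
  (∀ q ∈ W, q ∈ G.nodes (!j) → ∀ q', q' ∈ S → G.R q q' → q' ∈ W) ∧
  (∀ π, G.IsPlay π → (∀ n, π n ∈ S) → π 0 ∈ W →
     (∀ n, π n ∈ G.nodes j → π (n+1) = s (π n)) → G.WinsPlay j π)

lemma goodPair_empty (S : Set Q) (j : Bool) : G.GoodPair S j ∅ id :=
  ⟨Set.empty_subset _, fun q hq => absurd hq (Set.notMem_empty q),
   fun q hq => absurd hq (Set.notMem_empty q),
   fun _ _ _ h0 _ => absurd h0 (Set.notMem_empty _)⟩

end ParityGame
namespace ParityGame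

variable {Q : Type} (G : ParityGame Q)

set_option maxHeartbeats 2000000 in
lemma zielonka [Fintype Q] :
    ∀ n (S : Set Q), S.ncard ≤ n → G.TotalOn S →
    ∃ W : Bool → Set Q, W false ∪ W true = S ∧
      ∀ j, ∃ s : Q → Q, G.GoodPair S j (W j) s := by
  intro n
  induction n with
  | zero =>
    intro S hcard _
    have hS : S = ∅ := (Set.ncard_eq_zero S.toFinite).mp (by omega)
    subst hS
    exact ⟨fun _ => ∅, by simp, fun j => ⟨id, G.goodPair_empty ∅ j⟩⟩
  | succ n ih =>
    intro S hcard hTot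
    classical
    rcases Set.eq_empty_or_nonempty S with hS | hSne
    · subst hS
      exact ⟨fun _ => ∅, by simp, fun j => ⟨id, G.goodPair_empty ∅ j⟩⟩
    set p0 := sInf (G.p '' S) with hp0
    obtain ⟨q0, hq0S, hq0p⟩ := Nat.sInf_mem (hSne.image G.p)
    set i := (decide (Odd p0) : Bool) with hi
    have hpar : ∀ π : ℕ → Q, sInf (G.InfPrio π) = p0 → G.WinsPlay i π := by
      intro π hsinf
      by_cases h : Odd p0
      · have hit : i = true := by simp [hi, h]
        rw [hit]
        show Odd (sInf (G.InfPrio π))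
        rw [hsinf]; exact h
      · have hit : i = false := by simp [hi, h]
        rw [hit]
        show Even (sInf (G.InfPrio π))
        rw [hsinf]; exact Nat.not_odd_iff_even.mp h
    set P := {x | x ∈ S ∧ G.p x = p0} with hP
    have hPS : P ⊆ S := fun x hx => hx.1
    have hq0P : q0 ∈ P := ⟨hq0S, hq0p⟩
    have hple : ∀ q ∈ S, p0 ≤ G.p q := fun q hq => Nat.sInf_le ⟨q, hq, rfl⟩
    obtain ⟨A, a, rkA, hPA, hAS, hAstrat, hAforce, hAcomp1, hAcomp2⟩ :=
      G.attr_spec i S P hPS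
    set S1 := S \ A with hS1def
    have hS1tot : G.TotalOn S1 := by
      intro q hq
      rcases G.mem_nodes_or i q with hj | hj
      · obtain ⟨q', hq'S, hR⟩ := hTot q hq.1
        exact ⟨q', ⟨hq'S, hAcomp1 q hq.1 hq.2 hj q' hR⟩, hR⟩
      · obtain ⟨q', hq'S, hq'A, hR⟩ := hAcomp2 q hq.1 hq.2 hj
        exact ⟨q', ⟨hq'S, hq'A⟩, hR⟩
    have hS1card : S1.ncard ≤ n := by
      have hne : S1 ≠ S := by
        intro h
        have : q0 ∈ S1 := h ▸ hq0S
        exact this.2 (hPA hq0P)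
      have hss : S1 ⊂ S := (Set.diff_subset).ssubset_of_ne hne
      have := Set.ncard_lt_ncard hss S.toFinite
      omega
    obtain ⟨V, hVun, hV⟩ := ih S1 hS1card hS1tot
    have hViS : ∀ j, V j ⊆ S1 := by
      intro j x hx
      rw [← hVun]
      cases j
      · exact Or.inl hx
      · exact Or.inr hx
    -- the any-successor function
    set c : Q → Q := fun q => if h : ∃ q', q' ∈ S ∧ G.R q q' then h.choose else q with hc
    have hcS : ∀ q ∈ S, c q ∈ S ∧ G.R q (c q) := by
      intro q hq
      have h : ∃ q', q' ∈ S ∧ G.R q q' := hTot q hq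
      simp only [hc, dif_pos h]
      exact h.choose_spec
    by_cases hVne : V (!i) = ∅
    · -- CASE 1: the opponent's subregion is empty, player i wins all of S
      have hVi : V i = S1 := by
        have h := hVun
        cases hii : i
        · rw [hii] at hVne
          simp only [Bool.not_false] at hVne
          rwa [hVne, Set.union_empty] at h
        · rw [hii] at hVne
          simp only [Bool.not_true] at hVne
          rwa [hVne, Set.empty_union] at h
      obtain ⟨s1, hs1sub, hs1strat, hs1trap, hs1win⟩ := hV i
      set s : Q → Q := fun q => if q ∈ S1 then s1 q
        else if q ∈ A ∧ q ∉ P ∧ q ∈ G.nodes i then a q else c q with hs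
      refine ⟨fun j => if j = i then S else ∅, by cases i <;> simp, ?_⟩
      intro j
      by_cases hj : j = i
      · subst hj
        simp only [if_pos rfl]
        refine ⟨s, subset_rfl, ?_, fun q _ _ q' hq' _ => hq', ?_⟩
        · -- strategy legality
          intro q hqS hqj
          by_cases h1 : q ∈ S1
          · have hqV : q ∈ V i := by rw [hVi]; exact h1
            have hst := hs1strat q hqV hqj
            simp only [hs, if_pos h1]
            exact ⟨hst.1, (hViS i hst.2).1⟩
          · have hqA : q ∈ A := by
              by_contra hA'
              exact h1 ⟨hqS, hA'⟩
            by_cases h2 : q ∈ P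
            · have hcond : ¬(q ∈ A ∧ q ∉ P ∧ q ∈ G.nodes i) := by tauto
              simp only [hs, if_neg h1, if_neg hcond]
              exact ⟨(hcS q hqS).2, (hcS q hqS).1⟩
            · have hcond : q ∈ A ∧ q ∉ P ∧ q ∈ G.nodes i := ⟨hqA, h2, hqj⟩
              simp only [hs, if_neg h1, if_pos hcond]
              obtain ⟨hR, hbA, _⟩ := hAstrat q hqA h2 hqj
              exact ⟨hR, hAS hbA⟩
        · -- winning
          intro π hplay hin h0 hcons
          by_cases hA : ∀ N, ∃ m, N ≤ m ∧ π m ∈ A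
          · have hreach : ∀ m, π m ∈ A → ∃ m', m ≤ m' ∧ π m' ∈ P := by
              apply seq_reach (rk := rkA)
              intro m hmA hmP
              rcases G.mem_nodes_or i (π m) with hjj | hjj
              · have heq := hcons m hjj
                have hnS1 : π m ∉ S1 := fun h => h.2 hmA
                have hcond : π m ∈ A ∧ π m ∉ P ∧ π m ∈ G.nodes i := ⟨hmA, hmP, hjj⟩
                have heq2 : π (m+1) = a (π m) := by
                  rw [heq]; simp only [hs, if_neg hnS1, if_pos hcond]
                obtain ⟨_, h2, h3⟩ := hAstrat _ hmA hmP hjj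
                rw [heq2]; exact ⟨h2, h3⟩
              · exact hAforce _ hmA hmP hjj _ (hin (m+1)) (hplay m)
            have hPinf : p0 ∈ G.InfPrio π := by
              intro N
              obtain ⟨m, hm, hmA⟩ := hA N
              obtain ⟨m', hm', hm'P⟩ := hreach m hmA
              exact ⟨m', by omega, hm'P.2⟩
            have hsinf : sInf (G.InfPrio π) = p0 := by
              refine le_antisymm (Nat.sInf_le hPinf) (le_csInf ⟨p0, hPinf⟩ ?_)
              intro d hd
              obtain ⟨m, _, hm⟩ := hd 0
              exact hm ▸ hple _ (hin m)
            exact hpar π hsinf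
          · push_neg at hA
            obtain ⟨N, hN⟩ := hA
            apply G.winsPlay_tail (N := N)
            apply hs1win (fun k => π (k + N)) (G.isPlay_tail hplay N)
            · exact fun k => ⟨hin _, hN _ (by omega)⟩
            · show π (0 + N) ∈ V i
              rw [Nat.zero_add, hVi]
              exact ⟨hin N, hN N le_rfl⟩
            · intro k hk
              have h1 : π (k + N) ∈ S1 := ⟨hin _, hN _ (by omega)⟩
              show π (k + 1 + N) = s1 (π (k + N))
              rw [show k + 1 + N = (k + N) + 1 by omega, hcons (k + N) hk]
              simp only [hs, if_pos h1]
      · simp only [if_neg hj]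
        exact ⟨id, G.goodPair_empty S j⟩
    · -- CASE 2: the opponent wins part of the subgame
      have hVne' : (V (!i)).Nonempty := Set.nonempty_iff_ne_empty.mpr hVne
      obtain ⟨w0, hw0⟩ := hVne'
      obtain ⟨t, htsub, htstrat, httrap, htwin⟩ := hV (!i)
      simp only [Bool.not_not] at httrap
      obtain ⟨B, b, rkB, hWB, hBS, hBstrat, hBforce, hBcomp1, hBcomp2⟩ :=
        G.attr_spec (!i) S (V (!i)) ((hViS (!i)).trans Set.diff_subset)
      simp only [Bool.not_not] at hBforce hBcomp2
      set S2 := S \ B with hS2def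
      have hS2tot : G.TotalOn S2 := by
        intro q hq
        rcases G.mem_nodes_or i q with hjj | hjj
        · obtain ⟨q', hq'S, hq'B, hR⟩ := hBcomp2 q hq.1 hq.2 hjj
          exact ⟨q', ⟨hq'S, hq'B⟩, hR⟩
        · obtain ⟨q', hq'S, hR⟩ := hTot q hq.1
          exact ⟨q', ⟨hq'S, hBcomp1 q hq.1 hq.2 hjj q' hR⟩, hR⟩
      have hS2card : S2.ncard ≤ n := by
        have hne : S2 ≠ S := by
          intro h
          have hw0S : w0 ∈ S := (hViS (!i)).trans Set.diff_subset hw0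
          have : w0 ∈ S2 := h ▸ hw0S
          exact this.2 (hWB hw0)
        have hss : S2 ⊂ S := (Set.diff_subset).ssubset_of_ne hne
        have := Set.ncard_lt_ncard hss S.toFinite
        omega
      obtain ⟨U, hUun, hU⟩ := ih S2 hS2card hS2tot
      have hUiS : ∀ j, U j ⊆ S2 := by
        intro j x hx
        rw [← hUun]
        cases j
        · exact Or.inl hx
        · exact Or.inr hx
      obtain ⟨u1, hu1sub, hu1strat, hu1trap, hu1win⟩ := hU i
      obtain ⟨u2, hu2sub, hu2strat, hu2trap, hu2win⟩ := hU (!i)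
      simp only [Bool.not_not] at hu2trap
      have hine : (!i) ≠ i := by cases i <;> simp
      refine ⟨fun j => if j = i then U i else B ∪ U (!i), ?_, ?_⟩
      · have hkey : (U false ∪ U true) ∪ B = S := by
          rw [hUun]; exact Set.diff_union_of_subset hBS
        cases hii : i <;>
        · rw [← hkey]
          ext x
          simp only [Set.mem_union]
          simp
          tauto
      intro j
      by_cases hj : j = i
      · -- player i keeps the region U i
        subst hj
        simp only [if_pos rfl]
        have htrapS : ∀ q ∈ U i, q ∈ G.nodes (!i) → ∀ q', q' ∈ S → G.R q q' → q' ∈ U i := by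
          intro q hq hqoj q' hq'S hR
          have hqS2 : q ∈ S2 := hUiS i hq
          have hq'B : q' ∉ B := hBcomp1 q hqS2.1 hqS2.2 hqoj q' hR
          exact hu1trap q hq hqoj q' ⟨hq'S, hq'B⟩ hR
        refine ⟨u1, hu1sub.trans Set.diff_subset, hu1strat, htrapS, ?_⟩
        intro π hplay hin h0 hcons
        have hstay : ∀ k, π k ∈ U i :=
          fun k => G.stay_from hplay hin (fun q hq hqj => (hu1strat q hq hqj).2)
            htrapS hcons (m := 0) h0 k (by omega)
        exact hu1win π hplay (fun k => hu1sub (hstay k)) h0 hcons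
      · -- the opponent !i wins on B ∪ U (!i)
        have hj' : j = !i := by
          rcases Bool.eq_false_or_eq_true j with h | h <;>
            rcases Bool.eq_false_or_eq_true i with h2 | h2
          · exact absurd (h.trans h2.symm) hj
          · rw [h, h2]; rfl
          · rw [h, h2]; rfl
          · exact absurd (h.trans h2.symm) hj
        subst hj'
        simp only [if_neg hine]
        set s : Q → Q := fun q => if q ∈ V (!i) then t q
          else if q ∈ B then b q else u2 q with hs
        -- V (!i) is a trap for player i within all of S
        have hVtrapS : ∀ q ∈ V (!i), q ∈ G.nodes i → ∀ q', q' ∈ S → G.R q q' → q' ∈ V (!i) := by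
          intro q hq hqi q' hq'S hR
          have hqS1 : q ∈ S1 := hViS (!i) hq
          have hq'A : q' ∉ A := hAcomp1 q hqS1.1 hqS1.2 hqi q' hR
          exact httrap q hq hqi q' ⟨hq'S, hq'A⟩ hR
        have hWsub : B ∪ U (!i) ⊆ S :=
          Set.union_subset hBS (hu2sub.trans Set.diff_subset)
        -- strategy property
        have hstrat : ∀ q ∈ B ∪ U (!i), q ∈ G.nodes (!i) →
            G.R q (s q) ∧ s q ∈ B ∪ U (!i) := by
          intro q hq hqoj
          by_cases h1 : q ∈ V (!i)
          · have hst := htstrat q h1 hqoj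
            simp only [hs, if_pos h1]
            exact ⟨hst.1, Or.inl (hWB hst.2)⟩
          · rcases hq with hqB | hqU
            · have hst := hBstrat q hqB h1 hqoj
              simp only [hs, if_neg h1, if_pos hqB]
              exact ⟨hst.1, Or.inl hst.2.1⟩
            · have hqB : q ∉ B := (hUiS (!i) hqU).2
              have hst := hu2strat q hqU hqoj
              simp only [hs, if_neg h1, if_neg hqB]
              exact ⟨hst.1, Or.inr hst.2⟩
        -- trap property for player i
        have htrapS : ∀ q ∈ B ∪ U (!i), q ∈ G.nodes i → ∀ q', q' ∈ S → G.R q q' →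
            q' ∈ B ∪ U (!i) := by
          intro q hq hqi q' hq'S hR
          rcases hq with hqB | hqU
          · by_cases h1 : q ∈ V (!i)
            · exact Or.inl (hWB (hVtrapS q h1 hqi q' hq'S hR))
            · exact Or.inl (hBforce q hqB h1 hqi q' hq'S hR).1
          · by_cases h2 : q' ∈ B
            · exact Or.inl h2
            · exact Or.inr (hu2trap q hqU hqi q' ⟨hq'S, h2⟩ hR)
        refine ⟨s, hWsub, hstrat, (by simpa only [Bool.not_not] using htrapS), ?_⟩
        intro π hplay hin h0 hcons
        have hstayW : ∀ k, π k ∈ B ∪ U (!i) :=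
          fun k => G.stay_from hplay hin (fun q hq hqj => (hstrat q hq hqj).2)
            (by simpa only [Bool.not_not] using htrapS) hcons (m := 0) h0 k (by omega)
        by_cases hB : ∃ m, π m ∈ B
        · obtain ⟨m, hmB⟩ := hB
          have hreach : ∃ m', m ≤ m' ∧ π m' ∈ V (!i) := by
            refine seq_reach (rk := rkB) ?_ m hmB
            intro k hkB hkV
            rcases G.mem_nodes_or i (π k) with hjj | hjj
            · exact hBforce _ hkB hkV hjj _ (hin (k+1)) (hplay k)
            · have heq := hcons k hjj
              have heq2 : π (k+1) = b (π k) := by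
                rw [heq]; simp only [hs, if_neg hkV, if_pos hkB]
              obtain ⟨_, h2, h3⟩ := hBstrat _ hkB hkV hjj
              rw [heq2]; exact ⟨h2, h3⟩
          obtain ⟨m', hm'ge, hm'V⟩ := hreach
          have hstayV : ∀ k, m' ≤ k → π k ∈ V (!i) := by
            refine G.stay_from hplay hin ?_ ?_ hcons hm'V
            · intro q hq hqj
              simp only [hs, if_pos hq]
              exact (htstrat q hq hqj).2
            · simpa only [Bool.not_not] using hVtrapS
          apply G.winsPlay_tail (N := m')
          apply htwin (fun k => π (k + m')) (G.isPlay_tail hplay m')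
          · exact fun k => hViS (!i) (hstayV (k + m') (by omega))
          · show π (0 + m') ∈ V (!i)
            rw [Nat.zero_add]; exact hm'V
          · intro k hk
            have h1 : π (k + m') ∈ V (!i) := hstayV (k + m') (by omega)
            show π (k + 1 + m') = t (π (k + m'))
            rw [show k + 1 + m' = (k + m') + 1 by omega, hcons (k + m') hk]
            simp only [hs, if_pos h1]
        · push_neg at hB
          have hstayU : ∀ k, π k ∈ U (!i) :=
            fun k => (hstayW k).resolve_left (hB k)
          apply hu2win π hplay (fun k => hu2sub (hstayU k)) (hstayU 0)
          intro k hk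
          have h1 : π k ∉ V (!i) := fun h => hB k (hWB h)
          rw [hcons k hk]
          simp only [hs, if_neg h1, if_neg (hB k)]

end ParityGame
namespace ParityGame

open Classical in
/-- Merging a history-dependent strategy for `i` with a positional strategy
for the opponent, starting at `q`: carries the history explicitly. -/
noncomputable def mergeSeq {Q : Type} (G : ParityGame Q) (i : Bool)
    (σ : List Q → Q → Q) (s : Q → Q) (q : Q) : ℕ → List Q × Q
  | 0 => ([], q)
  | n+1 =>
    ((mergeSeq G i σ s q n).1 ++ [(mergeSeq G i σ s q n).2],
      if (mergeSeq G i σ s q n).2 ∈ G.nodes i then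
        σ (mergeSeq G i σ s q n).1 (mergeSeq G i σ s q n).2
      else s (mergeSeq G i σ s q n).2)

lemma mergeSeq_hist {Q : Type} (G : ParityGame Q) (i : Bool)
    (σ : List Q → Q → Q) (s : Q → Q) (q : Q) (n : ℕ) :
    (G.mergeSeq i σ s q n).1 = List.ofFn (fun k : Fin n => (G.mergeSeq i σ s q k).2) := by
  induction n with
  | zero => simp [mergeSeq]
  | succ n ih =>
    rw [List.ofFn_succ']
    show (G.mergeSeq i σ s q n).1 ++ [(G.mergeSeq i σ s q n).2] = _
    rw [ih, List.concat_eq_append]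
    congr 1

end ParityGame
/-- If player `i` has a winning strategy from node `q`, then player `i` has a
memoryless (history-independent) winning strategy from `q`. -/
theorem memoryless_winning {Q : Type} [Fintype Q] (G : ParityGame Q)
    (i : Bool) (q : Q) (hq : q ∈ G.WinRegion i) :
    ∃ σ : List Q → Q → Q, G.Legal i σ ∧
      (∀ h h' : List Q, ∀ q' : Q, σ h q' = σ h' q') ∧
      ∀ π, G.IsPlay π → π 0 = q → G.Consistent i σ π → G.WinsPlay i π := by
  classical
  have htot : G.TotalOn Set.univ := by
    intro x _
    obtain ⟨x', hx'⟩ := G.total x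
    exact ⟨x', Set.mem_univ x', hx'⟩
  obtain ⟨W, hWun, hW⟩ := G.zielonka (Set.ncard (Set.univ : Set Q)) Set.univ le_rfl htot
  have hq2 : q ∈ W i ∨ q ∈ W (!i) := by
    have h : q ∈ W false ∪ W true := by rw [hWun]; exact Set.mem_univ q
    cases i
    · exact h
    · exact h.symm
  rcases hq2 with hqi | hqo
  · -- q is in player i's Zielonka region: extract the positional strategy
    obtain ⟨s, hWsub, hstrat, htrap, hwin⟩ := hW i
    -- patch the strategy so that it is legal everywhere
    set c : Q → Q := fun x => (G.total x).choose with hc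
    have hcR : ∀ x, G.R x (c x) := fun x => (G.total x).choose_spec
    set sbar : Q → Q := fun x => if x ∈ W i ∧ x ∈ G.nodes i then s x else c x with hsbar
    refine ⟨fun _ x => sbar x, ?_, fun _ _ _ => rfl, ?_⟩
    · intro h x hx
      by_cases h1 : x ∈ W i ∧ x ∈ G.nodes i
      · simp only [hsbar, if_pos h1]
        exact (hstrat x h1.1 h1.2).1
      · simp only [hsbar, if_neg h1]
        exact hcR x
    · intro π hplay h0 hcons
      have hstay : ∀ n, π n ∈ W i := by
        intro n
        induction n with
        | zero => rw [h0]; exact hqi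
        | succ n ih =>
          rcases G.mem_nodes_or i (π n) with hj | hj
          · rw [hcons n hj]
            show sbar (π n) ∈ W i
            simp only [hsbar, if_pos (And.intro ih hj)]
            exact (hstrat _ ih hj).2
          · exact htrap _ ih hj _ (Set.mem_univ _) (hplay n)
      apply hwin π hplay (fun n => Set.mem_univ _) (hstay 0)
      intro n hn
      have := hcons n hn
      rw [this]
      show sbar (π n) = s (π n)
      simp only [hsbar, if_pos (And.intro (hstay n) hn)]
  · -- impossible: the opponent also wins from q, contradiction
    exfalso
    obtain ⟨s, hWsub, hstrat, htrap, hwin⟩ := hW (!i)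
    simp only [Bool.not_not] at htrap
    obtain ⟨σ0, hσleg, hσwin⟩ := hq
    set π : ℕ → Q := fun n => (G.mergeSeq i σ0 s q n).2 with hπ
    have hstep : ∀ n, π (n+1) =
        if π n ∈ G.nodes i then σ0 (List.ofFn (fun k : Fin n => π k)) (π n) else s (π n) := by
      intro n
      show (G.mergeSeq i σ0 s q (n+1)).2 = _
      rw [show (G.mergeSeq i σ0 s q (n+1)).2 =
        (if (G.mergeSeq i σ0 s q n).2 ∈ G.nodes i then
          σ0 (G.mergeSeq i σ0 s q n).1 (G.mergeSeq i σ0 s q n).2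
         else s (G.mergeSeq i σ0 s q n).2) from rfl]
      rw [G.mergeSeq_hist i σ0 s q n]
    have h0 : π 0 = q := rfl
    have hconsσ : G.Consistent i σ0 π := by
      intro n hn
      rw [hstep n, if_pos hn]
    have hconss : ∀ n, π n ∈ G.nodes (!i) → π (n+1) = s (π n) := by
      intro n hn
      have : π n ∉ G.nodes i := fun h => G.nodes_disj h hn
      rw [hstep n, if_neg this]
    have hstay : ∀ n, π n ∈ W (!i) := by
      intro n
      induction n with
      | zero => exact hqo
      | succ n ih =>
        rcases G.mem_nodes_or i (π n) with hj | hj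
        · have hR : G.R (π n) (π (n+1)) := by
            rw [hstep n, if_pos hj]
            exact hσleg _ _ hj
          exact htrap _ ih hj _ (Set.mem_univ _) hR
        · rw [hconss n hj]
          exact (hstrat _ ih hj).2
    have hplay : G.IsPlay π := by
      intro n
      rcases G.mem_nodes_or i (π n) with hj | hj
      · rw [hstep n, if_pos hj]
        exact hσleg _ _ hj
      · rw [hconss n hj]
        exact (hstrat _ (hstay n) hj).1
    exact G.winsPlay_not_both (hσwin π hplay h0 hconsσ)
      (hwin π hplay (fun n => Set.mem_univ _) (hstay 0) hconss)
end

section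
/- In an extended parity game whose parity sequence consists of a single odd parity set F (all non-visiting, non-avoiding nodes have the same odd priority), the winning region of Player 0 equals the least fixed point μY.(Q \ force_1(A ∪ (F \ Y))), i.e., the set of nodes from which Player 0 can force the play to eventually reach V while avoiding A. -/
open ParityGame
namespace APTAux
variable {Q : Type} (G : ParityGame Q)

open Classical in
noncomputable def chooseSucc (T : Set Q) (q : Q) : Q :=
  if h : ∃ q', G.R q q' ∧ q' ∈ T then h.choose else (G.total q).choose

lemma chooseSucc_R (T : Set Q) (q : Q) : G.R q (chooseSucc G T q) := by
  unfold chooseSucc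
  split
  · next h => exact h.choose_spec.1
  · exact (G.total q).choose_spec

lemma chooseSucc_mem {T : Set Q} {q : Q} (h : ∃ q', G.R q q' ∧ q' ∈ T) :
    chooseSucc G T q ∈ T := by
  unfold chooseSucc; rw [dif_pos h]; exact h.choose_spec.2

lemma compl_target {V A F : Set Q} (hVA : Disjoint V A) (hF : F = (V ∪ A)ᶜ)
    (Y : Set Q) (x : Q) : x ∉ A ∪ (F \ Y) ↔ x ∈ V ∪ (Y \ A) := by
  subst hF
  simp only [Set.mem_union, Set.mem_diff, Set.mem_compl_iff, not_or, not_and, not_not]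
  constructor
  · rintro ⟨hA, hFY⟩
    by_cases hV : x ∈ V
    · exact Or.inl hV
    · exact Or.inr ⟨hFY ⟨hV, hA⟩, hA⟩
  · rintro (hV | ⟨hY, hA⟩)
    · exact ⟨fun h => Set.disjoint_left.mp hVA hV h, fun h => absurd hV h.1⟩
    · exact ⟨hA, fun _ => hY⟩

lemma mem_force_compl {X : Set Q} {q : Q} :
    q ∈ (G.force true X)ᶜ ↔
      ((q ∈ G.Q1 → ∀ q', G.R q q' → q' ∉ X) ∧
       (q ∈ G.Q0 → ∃ q', G.R q q' ∧ q' ∉ X)) := by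
  simp only [ParityGame.force, ParityGame.nodes, Bool.not_true, if_true, if_false,
    Set.mem_compl_iff, Set.mem_union, Set.mem_setOf_eq, not_or, not_and, not_exists,
    not_forall]
  tauto

lemma mem_Phi {V A F : Set Q} (hVA : Disjoint V A) (hF : F = (V ∪ A)ᶜ)
    {Y : Set Q} {q : Q} :
    q ∈ (G.force true (A ∪ (F \ Y)))ᶜ ↔
      ((q ∈ G.Q1 → ∀ q', G.R q q' → q' ∈ V ∪ (Y \ A)) ∧
       (q ∈ G.Q0 → ∃ q', G.R q q' ∧ q' ∈ V ∪ (Y \ A))) := by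
  have hc := compl_target hVA hF Y
  rw [mem_force_compl]
  constructor <;>
    (rintro ⟨h1, h0⟩;
     refine ⟨fun hq1 q' hR => ?_, fun hq0 => ?_⟩)
  · exact (hc q').mp (h1 hq1 q' hR)
  · obtain ⟨q', hR, hm⟩ := h0 hq0
    exact ⟨q', hR, (hc q').mp hm⟩
  · exact (hc q').mpr (h1 hq1 q' hR)
  · obtain ⟨q', hR, hm⟩ := h0 hq0
    exact ⟨q', hR, (hc q').mpr hm⟩


def PhiFun (A F : Set Q) (Y : Set Q) : Set Q := (G.force true (A ∪ (F \ Y)))ᶜ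

def iter (A F : Set Q) (k : ℕ) : Set Q := (PhiFun G A F)^[k] ∅

lemma iter_succ (A F : Set Q) (k : ℕ) :
    iter G A F (k+1) = PhiFun G A F (iter G A F k) :=
  Function.iterate_succ_apply' _ _ _

lemma mem_PhiFun {V A F : Set Q} (hVA : Disjoint V A) (hF : F = (V ∪ A)ᶜ)
    {Y : Set Q} {q : Q} :
    q ∈ PhiFun G A F Y ↔
      ((q ∈ G.Q1 → ∀ q', G.R q q' → q' ∈ V ∪ (Y \ A)) ∧
       (q ∈ G.Q0 → ∃ q', G.R q q' ∧ q' ∈ V ∪ (Y \ A))) :=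
  mem_Phi G hVA hF

lemma exists_fixed [Finite Q] (A F : Set Q) (hmono : Monotone (PhiFun G A F)) :
    ∃ m, PhiFun G A F (iter G A F m) = iter G A F m := by
  have hchain : ∀ k, iter G A F k ⊆ iter G A F (k+1) := by
    intro k; induction k with
    | zero => simp [iter]
    | succ k IH => rw [iter_succ, iter_succ]; exact hmono IH
  have hmono' : Monotone (iter G A F) := monotone_nat_of_le_succ hchain
  have main : ∀ a b : ℕ, a < b → iter G A F a = iter G A F b →
      PhiFun G A F (iter G A F a) = iter G A F a := by
    intro a b hab heq
    rw [← iter_succ]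
    refine Set.Subset.antisymm ?_ (hchain a)
    rw [heq]
    exact hmono' hab
  obtain ⟨a, b, hab, heq⟩ := Finite.exists_ne_map_eq_of_infinite (iter G A F)
  rcases hab.lt_or_gt with h | h
  · exact ⟨a, main a b h heq⟩
  · exact ⟨b, main b a h heq.symm⟩

open Classical in
noncomputable def cplay (T : Set Q) (σ : List Q → Q → Q) (q : Q) : ℕ → List Q × Q
  | 0 => ([], q)
  | n+1 =>
      ((cplay T σ q n).1 ++ [(cplay T σ q n).2],
       if (cplay T σ q n).2 ∈ G.Q0 then σ (cplay T σ q n).1 (cplay T σ q n).2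
       else chooseSucc G T (cplay T σ q n).2)

lemma cplay_hist (T : Set Q) (σ : List Q → Q → Q) (q : Q) : ∀ n,
    (cplay G T σ q n).1 = List.ofFn (fun k : Fin n => (cplay G T σ q k).2)
  | 0 => rfl
  | (n+1) => by
      rw [cplay]
      simp only
      rw [cplay_hist T σ q n, List.ofFn_succ']
      simp [List.concat_eq_append]

lemma cplay_isPlay (T : Set Q) (σ : List Q → Q → Q) (q : Q) (hσ : G.Legal false σ) :
    G.IsPlay (fun n => (cplay G T σ q n).2) := by
  intro n
  show G.R (cplay G T σ q n).2 (cplay G T σ q (n+1)).2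
  rw [cplay]
  simp only
  split
  · next h => exact hσ _ _ (by simpa [ParityGame.nodes] using h)
  · exact chooseSucc_R G T _

lemma cplay_consistent (T : Set Q) (σ : List Q → Q → Q) (q : Q) :
    G.Consistent false σ (fun n => (cplay G T σ q n).2) := by
  intro n hmem
  have h0 : (cplay G T σ q n).2 ∈ G.Q0 := by simpa [ParityGame.nodes] using hmem
  show (cplay G T σ q (n+1)).2 = _
  rw [cplay]
  simp only [if_pos h0]
  rw [cplay_hist]

lemma cplay_step (T : Set Q) (σ : List Q → Q → Q) (q : Q) (hσ : G.Legal false σ) (n : ℕ)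
    (h : (cplay G T σ q n).2 ∈ G.force true T) : (cplay G T σ q (n+1)).2 ∈ T := by
  rcases h with ⟨h1, q', hq'T, hR⟩ | ⟨h0, hall⟩
  · have hq1 : (cplay G T σ q n).2 ∈ G.Q1 := by simpa [ParityGame.nodes] using h1
    have hnot : (cplay G T σ q n).2 ∉ G.Q0 := fun hc => Set.disjoint_left.mp G.disj hc hq1
    rw [cplay]
    simp only [if_neg hnot]
    exact chooseSucc_mem G ⟨q', hR, hq'T⟩
  · have hq0 : (cplay G T σ q n).2 ∈ G.nodes false := by simpa [ParityGame.nodes] using h0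
    apply hall
    rw [cplay]
    simp only
    split
    · exact hσ _ _ hq0
    · exact chooseSucc_R G T _

end APTAux

open APTAux in
/-- Base case of the APT recursion: if all free nodes (those outside `V ∪ A`)
carry one and the same odd priority, then Player 0's winning region of the
extended parity game equals `μY. (Q \ force_1(A ∪ (F \ Y)))`, i.e. the set of
nodes from which Player 0 can force the play to eventually reach `V` while
avoiding `A`. -/
theorem apt_single_odd {Q : Type} [Fintype Q] (G : ParityGame Q)
    (V A : Set Q) (hVA : Disjoint V A)
    (F : Set Q) (hF : F = (V ∪ A)ᶜ)
    (d : ℕ) (hd : Odd d) (hconst : ∀ q ∈ F, G.p q = d)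
    (hmono : Monotone (fun Y : Set Q => (G.force true (A ∪ (F \ Y)))ᶜ)) :
    G.EWinRegion false V A =
      OrderHom.lfp ⟨fun Y : Set Q => (G.force true (A ∪ (F \ Y)))ᶜ, hmono⟩ := by
  classical
  set Φ : Set Q →o Set Q := ⟨fun Y : Set Q => (G.force true (A ∪ (F \ Y)))ᶜ, hmono⟩ with hΦdef
  set L : Set Q := OrderHom.lfp Φ with hLdef
  have hfix : PhiFun G A F L = L := Φ.map_lfp
  apply Set.Subset.antisymm
  · -- win region ⊆ L
    rintro q ⟨σ, hσ, hwin⟩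
    by_contra hqL
    set T : Set Q := A ∪ (F \ L) with hT
    set π : ℕ → Q := fun n => (cplay G T σ q n).2 with hπ
    have hplay : G.IsPlay π := cplay_isPlay G T σ q hσ
    have h0 : π 0 = q := rfl
    have hcons : G.Consistent false σ π := cplay_consistent G T σ q
    have hstep : ∀ n, π n ∉ L → π (n+1) ∈ T := by
      intro n hn
      apply cplay_step G T σ q hσ
      rw [← hfix] at hn
      exact not_not.mp hn
    have hInv : ∀ n, (∀ m, 1 ≤ m → m ≤ n → π m ∉ A) → π n ∉ L ∧ (1 ≤ n → π n ∈ F \ L) := by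
      intro n; induction n with
      | zero => exact fun _ => ⟨hqL, by omega⟩
      | succ n IH =>
        intro hA
        have hn := (IH (fun m h1 h2 => hA m h1 (by omega))).1
        rcases hstep n hn with h | h
        · exact absurd h (hA (n+1) (by omega) le_rfl)
        · exact ⟨h.2, fun _ => h⟩
    rcases hwin π hplay h0 hcons with ⟨n, hn1, hnV, hnA⟩ | ⟨havoid, hwp⟩
    · have hnV' : π n ∈ V := by simpa using hnV
      have hAn : ∀ m, 1 ≤ m → m ≤ n → π m ∉ A := by
        intro m h1 h2
        rcases eq_or_lt_of_le h2 with rfl | hlt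
        · exact fun hA => Set.disjoint_left.mp hVA hnV' hA
        · exact by simpa using hnA m h1 hlt
      have := ((hInv n hAn).2 hn1).1
      rw [hF] at this
      exact this (Or.inl hnV')
    · have hwp' : Even (sInf (G.InfPrio π)) := by simpa [ParityGame.WinsPlay] using hwp
      have hFmem : ∀ n, 1 ≤ n → π n ∈ F := by
        intro n hn; rw [hF]; exact havoid n hn
      have hIP : G.InfPrio π = {d} := by
        ext c
        simp only [ParityGame.InfPrio, Set.mem_setOf_eq, Set.mem_singleton_iff]
        constructor
        · intro h
          obtain ⟨n, hn, hc⟩ := h 1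
          rw [← hc, hconst _ (hFmem n hn)]
        · rintro rfl N
          exact ⟨max N 1, le_max_left _ _, hconst _ (hFmem _ (le_max_right _ _))⟩
      rw [hIP, csInf_singleton] at hwp'
      exact (Nat.not_odd_iff_even.mpr hwp') hd
  · -- L ⊆ win region
    intro q hq
    obtain ⟨m, hm⟩ := exists_fixed G A F hmono
    have hLiter : L ⊆ iter G A F m := by
      rw [hLdef]
      exact OrderHom.lfp_le Φ (le_of_eq hm)
    refine ⟨fun _ q' =>
      chooseSucc G (V ∪ (iter G A F (sInf {k | q' ∈ iter G A F k} - 1) \ A)) q',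
      fun h q' _ => chooseSucc_R G _ q', ?_⟩
    intro π hplay h0 hcons
    left
    have key : ∀ k n, π n ∈ iter G A F k →
        ∃ j, 1 ≤ j ∧ π (n+j) ∈ V ∧ ∀ i, 1 ≤ i → i < j → π (n+i) ∉ A := by
      intro k
      induction k using Nat.strong_induction_on with
      | _ k IH =>
      intro n hn
      match k, hn, IH with
      | 0, hn, _ => simp [APTAux.iter] at hn
      | (k+1), hn, IH =>
      rw [iter_succ] at hn
      have hside : π n ∈ G.Q0 ∨ π n ∈ G.Q1 := by
        have h := Set.mem_univ (π n); rw [← G.covers] at h; exact h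
      rcases hside with hq0 | hq1
      · -- Player 0 node: consistency with our strategy
        set r := sInf {k' | π n ∈ iter G A F k'} with hr
        have hk1 : k + 1 ∈ {k' | π n ∈ iter G A F k'} := by
          rw [Set.mem_setOf_eq, iter_succ]; exact hn
        have hrmem : π n ∈ iter G A F r := Nat.sInf_mem ⟨k+1, hk1⟩
        have hrle : r ≤ k + 1 := Nat.sInf_le hk1
        have hrpos : r ≠ 0 := by
          intro h; rw [h] at hrmem; simp [APTAux.iter] at hrmem
        have hrmem' : π n ∈ PhiFun G A F (iter G A F (r-1)) := by
          rw [← iter_succ]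
          have : r - 1 + 1 = r := by omega
          rw [this]; exact hrmem
        have hex := ((mem_PhiFun G hVA hF).mp hrmem').2 hq0
        have hnext : π (n+1) = chooseSucc G (V ∪ (iter G A F (r-1) \ A)) (π n) := by
          have h := hcons n (by simpa [ParityGame.nodes] using hq0)
          rw [h]
        have hmemnext : π (n+1) ∈ V ∪ (iter G A F (r-1) \ A) := by
          rw [hnext]; exact chooseSucc_mem G hex
        rcases hmemnext with hV | ⟨hy, hA⟩
        · exact ⟨1, le_rfl, hV, fun i h1 h2 => by omega⟩
        · obtain ⟨j, hj1, hjV, hjA⟩ := IH (r-1) (by omega) (n+1) hy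
          refine ⟨j+1, by omega, ?_, ?_⟩
          · have heq : n + (j+1) = (n+1) + j := by omega
            rw [heq]; exact hjV
          · intro i h1 h2
            rcases eq_or_lt_of_le h1 with rfl | hgt
            · exact hA
            · have heq : n + i = (n+1) + (i-1) := by omega
              rw [heq]; exact hjA (i-1) (by omega) (by omega)
      · -- Player 1 node: all successors good
        have hall := ((mem_PhiFun G hVA hF).mp hn).1 hq1 (π (n+1)) (hplay n)
        rcases hall with hV | ⟨hy, hA⟩
        · exact ⟨1, le_rfl, hV, fun i h1 h2 => by omega⟩
        · obtain ⟨j, hj1, hjV, hjA⟩ := IH k (by omega) (n+1) hy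
          refine ⟨j+1, by omega, ?_, ?_⟩
          · have heq : n + (j+1) = (n+1) + j := by omega
            rw [heq]; exact hjV
          · intro i h1 h2
            rcases eq_or_lt_of_le h1 with rfl | hgt
            · exact hA
            · have heq : n + i = (n+1) + (i-1) := by omega
              rw [heq]; exact hjA (i-1) (by omega) (by omega)
    obtain ⟨j, hj1, hjV, hjA⟩ := key m 0 (by rw [h0]; exact hLiter hq)
    refine ⟨j, hj1, by simpa using hjV, fun i h1 h2 => by simpa using hjA i h1 h2⟩
end

section
/- In an extended parity game, if Y ⊆ Y' ⊆ F then Q \ Win_1(α', A ∪ (F \ Y), V ∪ (F ∩ Y)) ⊆ Q \ Win_1(α', A ∪ (F \ Y'), V ∪ (F ∩ Y')), i.e., Player 0's winning region is monotone under moving nodes of F from avoiding to visiting. -/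
open ParityGame
/-- Monotonicity of Player 0's winning region under moving nodes of `F` from
the avoiding side to the visiting side: if `Y ⊆ Y' ⊆ F` then
`Q \ Win₁(α', A ∪ (F \ Y), V ∪ (F ∩ Y)) ⊆ Q \ Win₁(α', A ∪ (F \ Y'), V ∪ (F ∩ Y'))`. -/
theorem ewin_move_avoid_to_visit {Q : Type} [Fintype Q] (G : ParityGame Q)
    (V A F : Set Q) (hVA : Disjoint V A) (hFV : Disjoint F (V ∪ A))
    (Y Y' : Set Q) (hYY' : Y ⊆ Y') (hY'F : Y' ⊆ F) :
    (G.EWinRegion true (V ∪ (F ∩ Y)) (A ∪ (F \ Y)))ᶜ ⊆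
      (G.EWinRegion true (V ∪ (F ∩ Y')) (A ∪ (F \ Y')))ᶜ := by
  apply Set.compl_subset_compl.2
  intro q hq
  obtain ⟨σ, hleg, hwin⟩ := hq
  refine ⟨σ, hleg, fun π hπ h0 hc => ?_⟩
  have hV : (V ∪ (F ∩ Y)) ⊆ (V ∪ (F ∩ Y')) :=
    Set.union_subset_union_right V (Set.inter_subset_inter_right F hYY')
  have hA : (A ∪ (F \ Y')) ⊆ (A ∪ (F \ Y)) :=
    Set.union_subset_union_right A (Set.diff_subset_diff_right hYY')
  have hAV : (A ∪ (F \ Y)) ⊆ (A ∪ (F \ Y')) ∪ (V ∪ (F ∩ Y')) := by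
    intro x hx
    rcases hx with hx | ⟨hxF, hxY⟩
    · exact Or.inl (Or.inl hx)
    · by_cases hx' : x ∈ Y'
      · exact Or.inr (Or.inr ⟨hxF, hx'⟩)
      · exact Or.inl (Or.inr ⟨hxF, hx'⟩)
  rcases hwin π hπ h0 hc with ⟨n, hn1, hnA, hm⟩ | ⟨havoid, hpar⟩
  · exact Or.inl ⟨n, hn1, hA (by simpa using hnA), fun m hm1 hmn =>
      fun hmem => hm m hm1 hmn (by simpa using hV hmem)⟩
  · refine Or.inr ⟨fun n hn => ?_, hpar⟩
    have h := havoid n hn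
    intro hmem
    rcases hmem with hmem | hmem
    · exact h (Or.inl (hV hmem))
    · rcases hAV hmem with h' | h'
      · exact h (Or.inr h')
      · exact h (Or.inl h')
end
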